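/- Let A ∈ ℝ^{n×d}, B ∈ ℝ^{d×n}, set M = A·B, and suppose M_r = U*Σ*(V*)^T satisfies the truncated-SVD hypotheses for M. Then for every i ∈ [n]: σ_r·‖(U*)^i‖ ≤ ‖A^i‖·‖B‖, where (U*)^i and A^i are i-th rows and ‖B‖ is the spectral norm of B. -/
import Mathlib


open Matrix

/-- Spectral norm (largest singular value) of a real matrix, as the operator
norm of the induced map between Euclidean spaces. -/
noncomputable def specNorm {n₁ n₂ : ℕ} (A : Matrix (Fin n₁) (Fin n₂) ℝ) : ℝ :=
  ‖LinearMap.toContinuousLinearMap (Matrix.toEuclideanLin A)‖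

section Aux
open scoped Matrix.Norms.L2Operator

lemma specNorm_eq_l2 {n₁ n₂ : ℕ} (A : Matrix (Fin n₁) (Fin n₂) ℝ) : specNorm A = ‖A‖ := rfl

theorem stmt18 {n d r : ℕ} (hr : 0 < r)
    (A : Matrix (Fin n) (Fin d) ℝ) (B : Matrix (Fin d) (Fin n) ℝ)
    (Ustar Vstar : Matrix (Fin n) (Fin r) ℝ) (σ : Fin r → ℝ)
    (hU : Ustarᵀ * Ustar = 1) (hV : Vstarᵀ * Vstar = 1)
    (hσmono : Antitone σ) (hσpos : ∀ k, 0 < σ k)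
    (Mr : Matrix (Fin n) (Fin n) ℝ) (hMr : Mr = Ustar * Matrix.diagonal σ * Vstarᵀ)
    (hUperp : Ustarᵀ * (A * B - Mr) = 0) (hVperp : (A * B - Mr) * Vstar = 0)
    (i : Fin n) :
    σ ⟨r - 1, by omega⟩ * Real.sqrt (∑ k, (Ustar i k) ^ 2) ≤
      Real.sqrt (∑ k, (A i k) ^ 2) * specNorm B := by
  classical
  have : Nonempty (Fin r) := ⟨⟨0, hr⟩⟩
  -- key identity : A * B * Vstar = Ustar * diagonal σ
  rw [Matrix.sub_mul, sub_eq_zero] at hVperp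
  have key : A * B * Vstar = Ustar * Matrix.diagonal σ := by
    rw [hVperp, hMr, Matrix.mul_assoc, hV, Matrix.mul_one]
  set σL := σ ⟨r - 1, by omega⟩ with hσL
  have hσLpos : 0 < σL := hσpos _
  have hσle : ∀ k, σL ≤ σ k := by
    intro k
    have hk := k.isLt
    exact hσmono (Fin.le_def.mpr (by simp; omega))
  -- entries of the product
  have hent : ∀ k, (A * B * Vstar) i k = Ustar i k * σ k := by
    intro k
    rw [key, Matrix.mul_diagonal]
  -- step 1 : σL * ‖U^i‖ ≤ sqrt (∑ ((ABV) i k)^2)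
  have step1 : σL * Real.sqrt (∑ k, (Ustar i k) ^ 2) ≤
      Real.sqrt (∑ k, ((A * B * Vstar) i k) ^ 2) := by
    have h1 : σL * Real.sqrt (∑ k, (Ustar i k) ^ 2)
        = Real.sqrt (σL ^ 2 * ∑ k, (Ustar i k) ^ 2) := by
      rw [Real.sqrt_mul (by positivity), Real.sqrt_sq hσLpos.le]
    rw [h1]
    apply Real.sqrt_le_sqrt
    rw [Finset.mul_sum]
    apply Finset.sum_le_sum
    intro k _
    rw [hent k]
    nlinarith [sq_nonneg (Ustar i k), hσle k, hσLpos.le,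
      mul_self_le_mul_self hσLpos.le (hσle k)]
  -- step 2 : identify row with mulVec
  set a : EuclideanSpace ℝ (Fin d) := (WithLp.equiv 2 (Fin d → ℝ)).symm (fun j => A i j) with ha
  have hrow : ((B * Vstar)ᵀ *ᵥ fun j => A i j) = fun k => (A * B * Vstar) i k := by
    funext k
    simp only [Matrix.mulVec, Matrix.mul_apply, Matrix.transpose_apply, dotProduct,
      Finset.sum_mul, Finset.mul_sum]
    rw [Finset.sum_comm]
    apply Finset.sum_congr rfl
    intro j _
    apply Finset.sum_congr rfl
    intro l _
    ring
  have step2 : Real.sqrt (∑ k, ((A * B * Vstar) i k) ^ 2)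
      = ‖(EuclideanSpace.equiv (Fin r) ℝ).symm <| (B * Vstar)ᵀ *ᵥ fun j => A i j‖ := by
    rw [EuclideanSpace.norm_eq]
    congr 1
    apply Finset.sum_congr rfl
    intro k _
    rw [Real.norm_eq_abs, sq_abs]
    congr 1
    exact (congrFun hrow k).symm
  -- step 3 : opnorm bound
  have step3 : ‖(EuclideanSpace.equiv (Fin r) ℝ).symm <| (B * Vstar)ᵀ *ᵥ fun j => A i j‖
      ≤ ‖(B * Vstar)ᵀ‖ * ‖a‖ := Matrix.l2_opNorm_mulVec _ a
  -- norms
  have hanorm : ‖a‖ = Real.sqrt (∑ k, (A i k) ^ 2) := by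
    rw [EuclideanSpace.norm_eq]
    congr 1
    exact Finset.sum_congr rfl fun k _ => by rw [Real.norm_eq_abs, sq_abs]; rfl
  have hVnorm : ‖Vstar‖ ≤ 1 := by
    have h2 : ‖Vstar‖ * ‖Vstar‖ = 1 := by
      rw [← Matrix.l2_opNorm_conjTranspose_mul_self]
      have : Vstarᴴ = Vstarᵀ := Matrix.conjTranspose_eq_transpose_of_trivial _
      rw [this, hV, norm_one]
    nlinarith [norm_nonneg Vstar]
  have hBV : ‖(B * Vstar)ᵀ‖ ≤ specNorm B := by
    have h3 : ‖(B * Vstar)ᵀ‖ = ‖B * Vstar‖ := by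
      have : (B * Vstar)ᴴ = (B * Vstar)ᵀ := Matrix.conjTranspose_eq_transpose_of_trivial _
      rw [← this, Matrix.l2_opNorm_conjTranspose]
    rw [h3, specNorm_eq_l2]
    calc ‖B * Vstar‖ ≤ ‖B‖ * ‖Vstar‖ := Matrix.l2_opNorm_mul B Vstar
      _ ≤ ‖B‖ * 1 := by
          exact mul_le_mul_of_nonneg_left hVnorm (norm_nonneg B)
      _ = ‖B‖ := mul_one _
  calc σL * Real.sqrt (∑ k, (Ustar i k) ^ 2)
      ≤ Real.sqrt (∑ k, ((A * B * Vstar) i k) ^ 2) := step1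
    _ = ‖(EuclideanSpace.equiv (Fin r) ℝ).symm <| (B * Vstar)ᵀ *ᵥ fun j => A i j‖ := step2
    _ ≤ ‖(B * Vstar)ᵀ‖ * ‖a‖ := step3
    _ ≤ specNorm B * ‖a‖ := mul_le_mul_of_nonneg_right hBV (norm_nonneg a)
    _ = Real.sqrt (∑ k, (A i k) ^ 2) * specNorm B := by rw [hanorm, mul_comm]

end Aux
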